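/- Let (K_n)_{n≥1} be nonnegative integral kernels on X, (ν_n)_{n≥1} nonzero finite measures on X, and (S_n⁻, S_n⁺)_{n≥1} bounded measurable functions with 0 < S_n⁻(x) ≤ S_n⁺(x) for all x, such that S_n⁻(x)ν_n(A) ≤ K_n(x,A) ≤ S_n⁺(x)ν_n(A) for all x, A and n ≥ 1. Set S̄_n := sup_{x,x'} S_n⁺(x)/S_n⁻(x'), assume C_S := sup_{n≥1} S̄_n < ∞, and set ρ_n := 1 − (inf_x S_n⁻(x)/S_n⁺(x))². Then: (i) sup_{n≥1} sup_{x,x'∈X} K_{0,n}(1)(x)/K_{0,n}(1)(x') ≤ C_S; and (ii) for every probability measure η on X, every bounded measurable φ, and every n ≥ 1, sup_{x∈X} | K_{0,n}(φ)(x)/ηK_{0,n}(1) − (K_{0,n}(1)(x)/ηK_{0,n}(1))·(ηK_{0,n}(φ)/ηK_{0,n}(1)) | ≤ 2‖φ‖ C_S ∏_{p=1}^{n} ρ_p. -/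

import Mathlib

open MeasureTheory ProbabilityTheory Filter
open scoped ENNReal

/-- The composition `K_{0,n} := K_1 K_2 ⋯ K_n` of integral kernels acting on functions,
with `K_{0,0} = Id`: `Kprod K n φ = K_1(K_2(⋯ K_n(φ)))`. -/
noncomputable def Kprod {X : Type*} [MeasurableSpace X] (K : ℕ → Kernel X X) :
    ℕ → (X → ℝ) → X → ℝ
  | 0 => fun φ => φ
  | n + 1 => fun φ => Kprod K n fun z => ∫ y, φ y ∂(K (n + 1) z)

/-!
If `sm x • ν ≤ κ x ≤ sp x • ν` and `ε * sp ≤ sm`, then for `u ≥ 0` the ratio `κ u / κ g` is at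
least `ε • ν u / ν g`. Applied to `u = f - m g` and `u = M g - f` this says that the ratio
`κ f / κ g` lies in an interval obtained from `[m, M] ∋ f / g` by contracting it by the factor
`1 - ε` towards `ν f / ν g`. Iterating over the kernels `K_n, …, K_1` shrinks the range of
`K_{0,n} φ / K_{0,n} 1` to length `2 ‖φ‖ ∏ (1 - ε_p) ≤ 2 ‖φ‖ ∏ ρ_p`, and the same comparison
with `ν_1` bounds the ratios `K_{0,n} 1 (x) / K_{0,n} 1 (x')` by `C_S`.
-/

section Sandwich

variable {X : Type*}

lemma iInf_div_nonneg {sm sp : X → ℝ} (hsm : ∀ x, 0 < sm x) (hle : ∀ x, sm x ≤ sp x) :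
    0 ≤ ⨅ x, sm x / sp x :=
  Real.iInf_nonneg fun x => div_nonneg (hsm x).le ((hsm x).trans_le (hle x)).le

lemma iInf_div_mul_le {sm sp : X → ℝ} (hsm : ∀ x, 0 < sm x) (hle : ∀ x, sm x ≤ sp x) (x : X) :
    (⨅ x, sm x / sp x) * sp x ≤ sm x := by
  have hbdd : BddBelow (Set.range fun x => sm x / sp x) :=
    ⟨0, Set.forall_mem_range.2 fun x => div_nonneg (hsm x).le ((hsm x).trans_le (hle x)).le⟩
  exact (le_div_iff₀ ((hsm x).trans_le (hle x))).1 (ciInf_le hbdd x)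

lemma iInf_div_le_one {sm sp : X → ℝ} (hsm : ∀ x, 0 < sm x) (hle : ∀ x, sm x ≤ sp x) (x : X) :
    ⨅ x, sm x / sp x ≤ 1 := by
  have hsp := (hsm x).trans_le (hle x)
  have := iInf_div_mul_le hsm hle x
  nlinarith [hle x]

variable [MeasurableSpace X]

structure IsPosBddMeasurable (g : X → ℝ) : Prop where
  measurable : Measurable g
  pos : ∀ x, 0 < g x
  bddAbove : BddAbove (Set.range g)

/-- `f / g` takes its values in an interval of length `D`. -/
def RatioOscLE (f g : X → ℝ) (D : ℝ) : Prop :=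
  ∃ m, ∀ y, m * g y ≤ f y ∧ f y ≤ (m + D) * g y

structure IsSandwiched (κ : Kernel X X) (ν : Measure X) (sm sp : X → ℝ) : Prop where
  isFiniteMeasure : IsFiniteMeasure ν
  ne_zero : ν ≠ 0
  pos : ∀ x, 0 < sm x
  le : ∀ x, sm x ≤ sp x
  bddAbove : BddAbove (Set.range sp)
  lower : ∀ x, ENNReal.ofReal (sm x) • ν ≤ κ x
  upper : ∀ x, κ x ≤ ENNReal.ofReal (sp x) • ν

lemma IsPosBddMeasurable.integrable {g : X → ℝ} (hg : IsPosBddMeasurable g) (μ : Measure X)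
    [IsFiniteMeasure μ] : Integrable g μ := by
  obtain ⟨c, hc⟩ := hg.bddAbove
  refine .of_bound hg.measurable.aestronglyMeasurable c (.of_forall fun y => ?_)
  rw [Real.norm_of_nonneg (hg.pos y).le]
  exact hc ⟨y, rfl⟩

lemma IsPosBddMeasurable.integral_pos {g : X → ℝ} (hg : IsPosBddMeasurable g) {μ : Measure X}
    [IsFiniteMeasure μ] (hμ : μ ≠ 0) : 0 < ∫ y, g y ∂μ := by
  rw [integral_pos_iff_support_of_nonneg (fun y => (hg.pos y).le) (hg.integrable μ),
    Function.support_eq_univ fun y => (hg.pos y).ne']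
  exact Measure.measure_univ_pos.2 hμ

lemma RatioOscLE.integrable {f g : X → ℝ} {D : ℝ} (hfg : RatioOscLE f g D)
    (hf : Measurable f) (hg : IsPosBddMeasurable g) (μ : Measure X) [IsFiniteMeasure μ] :
    Integrable f μ := by
  obtain ⟨m, hm⟩ := hfg
  obtain ⟨c, hc⟩ := hg.bddAbove
  refine .of_bound hf.aestronglyMeasurable ((|m| + |m + D|) * c) (.of_forall fun y => ?_)
  have hgy : g y ≤ c := hc ⟨y, rfl⟩
  have hg0 := (hg.pos y).le
  rw [Real.norm_eq_abs, abs_le]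
  constructor <;> nlinarith [(hm y).1, (hm y).2, neg_abs_le m, le_abs_self (m + D),
    abs_nonneg m, abs_nonneg (m + D)]

lemma integral_le_of_le_smul {μ ν : Measure X} {c : ℝ} (hc : 0 ≤ c)
    (hμ : μ ≤ ENNReal.ofReal c • ν) {g : X → ℝ} (hg : 0 ≤ g) (hgi : Integrable g ν) :
    ∫ y, g y ∂μ ≤ c * ∫ y, g y ∂ν := by
  have := integral_mono_measure hμ (.of_forall hg) (hgi.smul_measure ENNReal.ofReal_ne_top)
  rwa [integral_smul_measure, ENNReal.toReal_ofReal hc, smul_eq_mul] at this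

lemma le_integral_of_smul_le {μ ν : Measure X} {c : ℝ} (hc : 0 ≤ c)
    (hμ : ENNReal.ofReal c • ν ≤ μ) {g : X → ℝ} (hg : 0 ≤ g) (hgi : Integrable g μ) :
    c * ∫ y, g y ∂ν ≤ ∫ y, g y ∂μ := by
  have := integral_mono_measure hμ (.of_forall hg) hgi
  rwa [integral_smul_measure, ENNReal.toReal_ofReal hc, smul_eq_mul] at this

namespace IsSandwiched

variable {κ : Kernel X X} {ν : Measure X} {sm sp : X → ℝ}

lemma of_measurableSet [IsFiniteMeasure ν] (hν : ν ≠ 0) (hsm : ∀ x, 0 < sm x)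
    (hle : ∀ x, sm x ≤ sp x) (hsp : ∃ c, ∀ x, sp x ≤ c)
    (hκ : ∀ x A, MeasurableSet A →
      ENNReal.ofReal (sm x) * ν A ≤ κ x A ∧ κ x A ≤ ENNReal.ofReal (sp x) * ν A) :
    IsSandwiched κ ν sm sp where
  isFiniteMeasure := ‹_›
  ne_zero := hν
  pos := hsm
  le := hle
  bddAbove := hsp.imp fun _ hc => Set.forall_mem_range.2 hc
  lower x := Measure.le_iff.2 fun A hA => by simpa using (hκ x A hA).1
  upper x := Measure.le_iff.2 fun A hA => by simpa using (hκ x A hA).2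

lemma sp_pos (h : IsSandwiched κ ν sm sp) (x : X) : 0 < sp x :=
  (h.pos x).trans_le (h.le x)

lemma isFiniteMeasure_apply (h : IsSandwiched κ ν sm sp) (x : X) : IsFiniteMeasure (κ x) :=
  have := h.isFiniteMeasure
  have := ν.smul_finite (ENNReal.ofReal_ne_top (r := sp x))
  isFiniteMeasure_of_le _ (h.upper x)

lemma integral_pos (h : IsSandwiched κ ν sm sp) {g : X → ℝ} (hg : IsPosBddMeasurable g) :
    0 < ∫ y, g y ∂ν :=
  have := h.isFiniteMeasure
  hg.integral_pos h.ne_zero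

lemma isPosBddMeasurable_integral (h : IsSandwiched κ ν sm sp) {g : X → ℝ}
    (hg : IsPosBddMeasurable g) : IsPosBddMeasurable fun x => ∫ y, g y ∂κ x := by
  have := h.isFiniteMeasure
  obtain ⟨c, hc⟩ := h.bddAbove
  refine ⟨hg.measurable.stronglyMeasurable.integral_kernel.measurable, fun x => ?_,
    ⟨c * ∫ y, g y ∂ν, ?_⟩⟩
  · have := h.isFiniteMeasure_apply x
    exact (mul_pos (h.pos x) (h.integral_pos hg)).trans_le
      (le_integral_of_smul_le (h.pos x).le (h.lower x) (fun y => (hg.pos y).le) (hg.integrable _))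
  · rintro _ ⟨x, rfl⟩
    exact (integral_le_of_le_smul (h.sp_pos x).le (h.upper x) (fun y => (hg.pos y).le)
      (hg.integrable ν)).trans (mul_le_mul_of_nonneg_right (hc ⟨x, rfl⟩) (h.integral_pos hg).le)

lemma mul_integral_le (h : IsSandwiched κ ν sm sp) {ε : ℝ} (hε0 : 0 ≤ ε)
    (hε : ∀ x, ε * sp x ≤ sm x) {g u : X → ℝ} (hg : IsPosBddMeasurable g) (hu : 0 ≤ u) (x : X)
    (hui : Integrable u (κ x)) :
    ε * (∫ y, g y ∂κ x) * ∫ y, u y ∂ν ≤ (∫ y, g y ∂ν) * ∫ y, u y ∂κ x := by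
  have := h.isFiniteMeasure
  have hνu : 0 ≤ ∫ y, u y ∂ν := integral_nonneg hu
  have hνg := h.integral_pos hg
  calc ε * (∫ y, g y ∂κ x) * ∫ y, u y ∂ν
      ≤ ε * (sp x * ∫ y, g y ∂ν) * ∫ y, u y ∂ν := by
        gcongr
        exact integral_le_of_le_smul (h.sp_pos x).le (h.upper x) (fun y => (hg.pos y).le)
          (hg.integrable ν)
    _ = (∫ y, g y ∂ν) * ((ε * sp x) * ∫ y, u y ∂ν) := by ring
    _ ≤ (∫ y, g y ∂ν) * (sm x * ∫ y, u y ∂ν) := by gcongr; exact hε x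
    _ ≤ (∫ y, g y ∂ν) * ∫ y, u y ∂κ x := by
        gcongr
        exact le_integral_of_smul_le (h.pos x).le (h.lower x) hu hui

lemma ratioOscLE_integral (h : IsSandwiched κ ν sm sp) {ε : ℝ} (hε0 : 0 ≤ ε)
    (hε : ∀ x, ε * sp x ≤ sm x) {f g : X → ℝ} {D : ℝ} (hg : IsPosBddMeasurable g)
    (hf : Measurable f) (hfg : RatioOscLE f g D) :
    RatioOscLE (fun x => ∫ y, f y ∂κ x) (fun x => ∫ y, g y ∂κ x) ((1 - ε) * D) := by
  have := h.isFiniteMeasure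
  obtain ⟨m, hm⟩ := id hfg
  set νg := ∫ y, g y ∂ν
  set νf := ∫ y, f y ∂ν
  have hνg : 0 < νg := h.integral_pos hg
  have key : νf / νg * νg = νf := div_mul_cancel₀ _ hνg.ne'
  -- `[m, m + D]` contracted by the factor `1 - ε` towards `ν f / ν g`
  refine ⟨m + ε * (νf / νg - m), fun x => ?_⟩
  have := h.isFiniteMeasure_apply x
  have hgi := hg.integrable (κ x)
  have hfi := hfg.integrable hf hg (κ x)
  have hνgi := hg.integrable ν
  have hνfi := hfg.integrable hf hg ν
  have hlow := h.mul_integral_le hε0 hε hg (u := fun y => f y - m * g y)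
    (fun y => sub_nonneg.2 (hm y).1) x (hfi.sub (hgi.const_mul m))
  have hup := h.mul_integral_le hε0 hε hg (u := fun y => (m + D) * g y - f y)
    (fun y => sub_nonneg.2 (hm y).2) x ((hgi.const_mul _).sub hfi)
  rw [integral_sub hνfi (hνgi.const_mul m), integral_sub hfi (hgi.const_mul m),
    integral_const_mul, integral_const_mul] at hlow
  rw [integral_sub (hνgi.const_mul _) hνfi, integral_sub (hgi.const_mul _) hfi,
    integral_const_mul, integral_const_mul] at hup
  constructor
  · refine le_of_mul_le_mul_right ?_ hνg
    linear_combination hlow + ε * (∫ y, g y ∂κ x) * key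
  · refine le_of_mul_le_mul_right ?_ hνg
    linear_combination hup - ε * (∫ y, g y ∂κ x) * key

lemma integral_le_mul_integral (h : IsSandwiched κ ν sm sp) {C : ℝ}
    (hC : ∀ x x', sp x / sm x' ≤ C) {g : X → ℝ} (hg : IsPosBddMeasurable g) (x x' : X) :
    ∫ y, g y ∂κ x ≤ C * ∫ y, g y ∂κ x' := by
  have := h.isFiniteMeasure
  have := h.isFiniteMeasure_apply x'
  have hspC : sp x ≤ C * sm x' := (div_le_iff₀ (h.pos x')).1 (hC x x')
  have hC0 : 0 ≤ C := (div_nonneg (h.sp_pos x).le (h.pos x').le).trans (hC x x')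
  have hνg := (h.integral_pos hg).le
  calc ∫ y, g y ∂κ x ≤ sp x * ∫ y, g y ∂ν :=
        integral_le_of_le_smul (h.sp_pos x).le (h.upper x) (fun y => (hg.pos y).le)
          (hg.integrable ν)
    _ ≤ C * (sm x' * ∫ y, g y ∂ν) := by rw [← mul_assoc]; gcongr
    _ ≤ C * ∫ y, g y ∂κ x' := by
        gcongr
        exact le_integral_of_smul_le (h.pos x').le (h.lower x') (fun y => (hg.pos y).le)
          (hg.integrable _)

end IsSandwiched

lemma abs_div_integral_sub_le {η : Measure X} [IsProbabilityMeasure η] {F G : X → ℝ} {D C : ℝ}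
    (hG : IsPosBddMeasurable G) (hF : Measurable F) (hFG : RatioOscLE F G D) {x : X}
    (hC : ∀ z, G x ≤ C * G z) :
    |F x / (∫ z, G z ∂η) - G x / (∫ z, G z ∂η) * ((∫ z, F z ∂η) / ∫ z, G z ∂η)| ≤ D * C := by
  obtain ⟨m, hm⟩ := id hFG
  have hGi := hG.integrable η
  have hFi := hFG.integrable hF hG η
  set I := ∫ z, G z ∂η
  set J := ∫ z, F z ∂η
  have hI : 0 < I := hG.integral_pos (IsProbabilityMeasure.ne_zero η)
  have hGx := hG.pos x
  have hJlow : m * I ≤ J := by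
    rw [← integral_const_mul]; exact integral_mono (hGi.const_mul m) hFi fun z => (hm z).1
  have hJup : J ≤ (m + D) * I := by
    rw [← integral_const_mul]; exact integral_mono hFi (hGi.const_mul _) fun z => (hm z).2
  have hGxI : G x / I ≤ C := by
    have := integral_mono (integrable_const (G x)) (hGi.const_mul C) hC
    rw [integral_const_mul] at this
    rw [div_le_iff₀ hI]
    simpa using this
  have hdiff : |F x / G x - J / I| ≤ D := by
    have := (le_div_iff₀ hGx).2 (hm x).1
    have := (div_le_iff₀ hGx).2 (hm x).2
    have := (le_div_iff₀ hI).2 hJlow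
    have := (div_le_iff₀ hI).2 hJup
    rw [abs_le]; constructor <;> linarith
  calc |F x / I - G x / I * (J / I)| = G x / I * |F x / G x - J / I| := by
        rw [← abs_of_pos (div_pos hGx hI), ← abs_mul, abs_of_pos (div_pos hGx hI)]
        congr 1; field_simp
    _ ≤ C * D := mul_le_mul hGxI hdiff (abs_nonneg _) ((div_pos hGx hI).le.trans hGxI)
    _ = D * C := mul_comm _ _

end Sandwich

section Kprod

variable {X : Type*} [MeasurableSpace X] {K : ℕ → Kernel X X} {νs : ℕ → Measure X}
  {Sm Sp : ℕ → X → ℝ}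

lemma measurable_Kprod (n : ℕ) {f : X → ℝ} (hf : Measurable f) : Measurable (Kprod K n f) := by
  induction n generalizing f with
  | zero => exact hf
  | succ n ih => exact ih hf.stronglyMeasurable.integral_kernel.measurable

lemma isPosBddMeasurable_Kprod (hK : ∀ n, 1 ≤ n → IsSandwiched (K n) (νs n) (Sm n) (Sp n))
    {g : X → ℝ} (hg : IsPosBddMeasurable g) (n : ℕ) : IsPosBddMeasurable (Kprod K n g) := by
  induction n generalizing g with
  | zero => exact hg
  | succ n ih => exact ih ((hK (n + 1) n.succ_pos).isPosBddMeasurable_integral hg)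

lemma ratioOscLE_Kprod (hK : ∀ n, 1 ≤ n → IsSandwiched (K n) (νs n) (Sm n) (Sp n))
    {ε : ℕ → ℝ} (hε0 : ∀ n, 1 ≤ n → 0 ≤ ε n) (hε : ∀ n, 1 ≤ n → ∀ x, ε n * Sp n x ≤ Sm n x)
    {f g : X → ℝ} {D : ℝ} (hg : IsPosBddMeasurable g) (hf : Measurable f)
    (hfg : RatioOscLE f g D) (n : ℕ) :
    RatioOscLE (Kprod K n f) (Kprod K n g) ((∏ p ∈ Finset.Icc 1 n, (1 - ε p)) * D) := by
  induction n generalizing f g D with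
  | zero => simpa [Kprod] using hfg
  | succ n ih =>
    have hK1 := hK (n + 1) n.succ_pos
    rw [Finset.prod_Icc_succ_top (by omega), mul_assoc]
    exact ih (hK1.isPosBddMeasurable_integral hg) hf.stronglyMeasurable.integral_kernel.measurable
      (hK1.ratioOscLE_integral (hε0 _ n.succ_pos) (hε _ n.succ_pos) hg hf hfg)

lemma Kprod_le_mul_Kprod (hK : ∀ n, 1 ≤ n → IsSandwiched (K n) (νs n) (Sm n) (Sp n)) {C : ℝ}
    (hC : ∀ n, 1 ≤ n → ∀ x x', Sp n x / Sm n x' ≤ C) {g : X → ℝ} (hg : IsPosBddMeasurable g)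
    {n : ℕ} (hn : 1 ≤ n) (x x' : X) : Kprod K n g x ≤ C * Kprod K n g x' := by
  induction n, hn using Nat.le_induction generalizing g with
  | base => exact (hK 1 le_rfl).integral_le_mul_integral (hC 1 le_rfl) hg x x'
  | succ n hn ih =>
    exact ih ((hK (n + 1) (by omega)).isPosBddMeasurable_integral hg)

end Kprod

theorem stmt13_general {X : Type*} [MeasurableSpace X]
    (K : ℕ → Kernel X X) (νs : ℕ → Measure X)
    (hν_fin : ∀ n, IsFiniteMeasure (νs n)) (hν_ne : ∀ n, νs n ≠ 0)
    (Sm Sp : ℕ → X → ℝ)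
    (hSm_pos : ∀ n x, 0 < Sm n x) (hS_le : ∀ n x, Sm n x ≤ Sp n x)
    (hSp_bdd : ∀ n, ∃ c, ∀ x, Sp n x ≤ c)
    (h_sandwich : ∀ n : ℕ, 1 ≤ n → ∀ (x : X) (A : Set X), MeasurableSet A →
      ENNReal.ofReal (Sm n x) * νs n A ≤ K n x A ∧
        K n x A ≤ ENNReal.ofReal (Sp n x) * νs n A)
    (CS : ℝ) (hCS : ∀ n : ℕ, 1 ≤ n → ∀ x x' : X, Sp n x / Sm n x' ≤ CS) :
    -- (i) uniform control of the ratios of K_{0,n}(1)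
    (∀ n : ℕ, 1 ≤ n → ∀ x x' : X,
      Kprod K n (fun _ => (1 : ℝ)) x / Kprod K n (fun _ => (1 : ℝ)) x' ≤ CS) ∧
    -- (ii) path-wise contraction estimate
    (∀ (η : Measure X), IsProbabilityMeasure η →
      ∀ (φ : X → ℝ), Measurable φ → ∀ b : ℝ, (∀ x, |φ x| ≤ b) →
      ∀ n : ℕ, 1 ≤ n → ∀ x : X,
        |(Kprod K n φ x) / (∫ z, Kprod K n (fun _ => (1 : ℝ)) z ∂η)
            - (Kprod K n (fun _ => (1 : ℝ)) x / ∫ z, Kprod K n (fun _ => (1 : ℝ)) z ∂η)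
              * ((∫ z, Kprod K n φ z ∂η) / ∫ z, Kprod K n (fun _ => (1 : ℝ)) z ∂η)|
          ≤ 2 * b * CS * ∏ p ∈ Finset.Icc 1 n, (1 - (⨅ x' : X, Sm p x' / Sp p x') ^ 2)) := by
  have hK : ∀ n, 1 ≤ n → IsSandwiched (K n) (νs n) (Sm n) (Sp n) := fun n hn =>
    have := hν_fin n
    .of_measurableSet (hν_ne n) (hSm_pos n) (hS_le n) (hSp_bdd n) (h_sandwich n hn)
  have h1 : IsPosBddMeasurable fun _ : X => (1 : ℝ) :=
    ⟨measurable_const, fun _ => one_pos, ⟨1, Set.forall_mem_range.2 fun _ => le_rfl⟩⟩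
  have hratio := fun n (hn : 1 ≤ n) => Kprod_le_mul_Kprod hK hCS h1 hn
  refine ⟨fun n hn x x' =>
    (div_le_iff₀ ((isPosBddMeasurable_Kprod hK h1 n).pos x')).2 (hratio n hn x x'), ?_⟩
  intro η _ φ hφ b hb n hn x
  set ε := fun p => ⨅ x', Sm p x' / Sp p x'
  have hε0 (p : ℕ) : 0 ≤ ε p := iInf_div_nonneg (hSm_pos p) (hS_le p)
  have hε1 (p : ℕ) : ε p ≤ 1 := iInf_div_le_one (hSm_pos p) (hS_le p) x
  have hφ1 : RatioOscLE φ (fun _ => 1) (2 * b) :=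
    ⟨-b, fun y => by constructor <;> linarith [abs_le.1 (hb y)]⟩
  have hb0 : 0 ≤ b := (abs_nonneg _).trans (hb x)
  have hCS0 : 0 ≤ CS :=
    (div_nonneg ((hSm_pos 1 x).trans_le (hS_le 1 x)).le (hSm_pos 1 x).le).trans (hCS 1 le_rfl x x)
  calc _ ≤ (∏ p ∈ Finset.Icc 1 n, (1 - ε p)) * (2 * b) * CS :=
        abs_div_integral_sub_le (isPosBddMeasurable_Kprod hK h1 n) (measurable_Kprod n hφ)
          (ratioOscLE_Kprod hK (fun p _ => hε0 p)
            (fun p _ => iInf_div_mul_le (hSm_pos p) (hS_le p)) h1 hφ hφ1 n) (hratio n hn x)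
    _ = 2 * b * CS * ∏ p ∈ Finset.Icc 1 n, (1 - ε p) := by ring
    _ ≤ 2 * b * CS * ∏ p ∈ Finset.Icc 1 n, (1 - ε p ^ 2) := by
        gcongr with p
        · exact fun p _ => sub_nonneg.2 (hε1 p)
        · nlinarith [hε0 p, hε1 p]

theorem stmt13 {X : Type*} [MeasurableSpace X]
    (K : ℕ → Kernel X X) (νs : ℕ → Measure X)
    (hν_fin : ∀ n, IsFiniteMeasure (νs n)) (hν_ne : ∀ n, νs n ≠ 0)
    (Sm Sp : ℕ → X → ℝ)
    (hSm_meas : ∀ n, Measurable (Sm n)) (hSp_meas : ∀ n, Measurable (Sp n))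
    (hSm_pos : ∀ n x, 0 < Sm n x) (hS_le : ∀ n x, Sm n x ≤ Sp n x)
    (hSp_bdd : ∀ n, ∃ c, ∀ x, Sp n x ≤ c)
    (h_sandwich : ∀ n : ℕ, 1 ≤ n → ∀ (x : X) (A : Set X), MeasurableSet A →
      ENNReal.ofReal (Sm n x) * νs n A ≤ K n x A ∧
        K n x A ≤ ENNReal.ofReal (Sp n x) * νs n A)
    (CS : ℝ) (hCS : ∀ n : ℕ, 1 ≤ n → ∀ x x' : X, Sp n x / Sm n x' ≤ CS) :
    -- (i) uniform control of the ratios of K_{0,n}(1)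
    (∀ n : ℕ, 1 ≤ n → ∀ x x' : X,
      Kprod K n (fun _ => (1 : ℝ)) x / Kprod K n (fun _ => (1 : ℝ)) x' ≤ CS) ∧
    -- (ii) path-wise contraction estimate
    (∀ (η : Measure X), IsProbabilityMeasure η →
      ∀ (φ : X → ℝ), Measurable φ → ∀ b : ℝ, (∀ x, |φ x| ≤ b) →
      ∀ n : ℕ, 1 ≤ n → ∀ x : X,
        |(Kprod K n φ x) / (∫ z, Kprod K n (fun _ => (1 : ℝ)) z ∂η)
            - (Kprod K n (fun _ => (1 : ℝ)) x / ∫ z, Kprod K n (fun _ => (1 : ℝ)) z ∂η)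
              * ((∫ z, Kprod K n φ z ∂η) / ∫ z, Kprod K n (fun _ => (1 : ℝ)) z ∂η)|
          ≤ 2 * b * CS * ∏ p ∈ Finset.Icc 1 n, (1 - (⨅ x' : X, Sm p x' / Sp p x') ^ 2)) :=
  stmt13_general K νs hν_fin hν_ne Sm Sp hSm_pos hS_le hSp_bdd h_sandwich CS hCS
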